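/- arXiv:2106.08882 — 4 statements merged into one kernel-verified Lean document; each statement's English description precedes it below -/
import Mathlib

section
/- Let G be an n×d real matrix. For each column j, let s_j = ||G[:,j]||². Form C_k(G) by keeping a set of k columns sampled with probabilities proportional to s_j (zeroing the remaining columns). Then E||C_k(G) - G||_F² ≤ (1 - k/d)||G||_F², i.e., the block coordinate selection is a contraction with factor ξ ≥ k/d. -/
open Finset

/-!
Write `s j = ‖G[:,j]‖²` and `q j = P(j ∈ ω)` for the inclusion probability of column `j`.
The expected error only sees the dropped columns, so it equals `∑ j, s j * (1 - q j)`.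
Since every sampled set has `k` elements, `∑ j, q j = k`, and since `q` is monotone in `s`,
Chebyshev's sum inequality gives `∑ j, s j * q j ≥ (k / d) * ∑ j, s j`.
-/

variable {ι : Type*} [Fintype ι]

theorem Monovary.sum_div_card_mul_sum_le {f g : ι → ℝ} (hfg : Monovary f g) :
    (∑ i, g i) / Fintype.card ι * ∑ i, f i ≤ ∑ i, f i * g i := by
  rcases isEmpty_or_nonempty ι with hι | hι
  · simp
  rw [div_mul_eq_mul_div, div_le_iff₀' (by positivity), mul_comm]
  exact hfg.sum_mul_sum_le_card_mul_sum

variable [DecidableEq ι]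

def inclusionProb (p : Finset ι → ℝ) (j : ι) : ℝ :=
  ∑ ω with j ∈ ω, p ω

theorem sum_inclusionProb (p : Finset ι → ℝ) :
    ∑ j, inclusionProb p j = ∑ ω, p ω * #ω := by
  simp only [inclusionProb, sum_filter]
  rw [sum_comm]
  refine sum_congr rfl fun ω _ => ?_
  rw [sum_ite_mem, univ_inter, sum_const, nsmul_eq_mul, mul_comm]

theorem sum_inclusionProb_of_card_eq {p : Finset ι → ℝ} {k : ℕ} (hp1 : ∑ ω, p ω = 1)
    (hcard : ∀ ω, p ω ≠ 0 → #ω = k) :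
    ∑ j, inclusionProb p j = k := by
  have hterm (ω : Finset ι) : p ω * #ω = p ω * k := by
    by_cases h : p ω = 0
    · simp [h]
    · rw [hcard ω h]
  simp only [sum_inclusionProb, hterm, ← sum_mul, hp1, one_mul]

theorem sum_mul_sum_compl {p : Finset ι → ℝ} (hp1 : ∑ ω, p ω = 1) (s : ι → ℝ) :
    ∑ ω, p ω * ∑ j ∈ ωᶜ, s j = ∑ j, s j * (1 - inclusionProb p j) := by
  have hmiss (j : ι) : ∑ ω with j ∉ ω, p ω = 1 - inclusionProb p j := by
    rw [← hp1, inclusionProb, ← sum_filter_add_sum_filter_not univ (fun ω => j ∈ ω)]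
    ring
  simp only [← hmiss, mul_sum, mul_comm (s _), sum_mul]
  exact sum_comm' fun ω j => by simp

theorem sum_sq_ite_mem_sub_self {m : Type*} [Fintype m] (G : Matrix m ι ℝ) (ω : Finset ι) :
    ∑ i, ∑ j, ((if j ∈ ω then G i j else 0) - G i j) ^ 2 = ∑ j ∈ ωᶜ, ∑ i, G i j ^ 2 := by
  rw [sum_comm, ← sum_compl_add_sum ω, add_eq_left.mpr]
  · refine sum_congr rfl fun j hj => ?_
    simp [mem_compl.mp hj]
  · exact sum_eq_zero fun j hj => by simp [hj]

theorem block_coordinate_selection_contraction_general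
    {n d k : ℕ}
    (G : Matrix (Fin n) (Fin d) ℝ)
    (p : Finset (Fin d) → ℝ)
    (hp1 : ∑ ω : Finset (Fin d), p ω = 1)
    (hcard : ∀ ω, p ω ≠ 0 → ω.card = k)
    (hmono : ∀ j j' : Fin d,
      (∑ i, (G i j) ^ 2) ≤ (∑ i, (G i j') ^ 2) →
      (∑ ω ∈ Finset.univ.filter (fun ω : Finset (Fin d) => j ∈ ω), p ω) ≤
        (∑ ω ∈ Finset.univ.filter (fun ω : Finset (Fin d) => j' ∈ ω), p ω)) :
    ∑ ω : Finset (Fin d), p ω *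
        (∑ i, ∑ j, ((if j ∈ ω then G i j else 0) - G i j) ^ 2) ≤
      (1 - (k : ℝ) / d) * ∑ i, ∑ j, (G i j) ^ 2 := by
  set s : Fin d → ℝ := fun j => ∑ i, G i j ^ 2
  have hmv : Monovary s (inclusionProb p) :=
    Monovary.symm fun j j' h => hmono j j' h.le
  have hcheb := hmv.sum_div_card_mul_sum_le
  rw [sum_inclusionProb_of_card_eq hp1 hcard, Fintype.card_fin] at hcheb
  calc _ = ∑ ω, p ω * ∑ j ∈ ωᶜ, s j := by simp only [sum_sq_ite_mem_sub_self, s]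
    _ = ∑ j, s j * (1 - inclusionProb p j) := sum_mul_sum_compl hp1 s
    _ = ∑ j, s j - ∑ j, s j * inclusionProb p j := by
      simp only [mul_sub, mul_one, sum_sub_distrib]
    _ ≤ ∑ j, s j - k / d * ∑ j, s j := sub_le_sub_left hcheb _
    _ = (1 - (k : ℝ) / d) * ∑ i, ∑ j, G i j ^ 2 := by
      rw [sum_comm]
      ring

/-- Block coordinate selection (Algorithm 2): sampling a `k`-subset of columns with
probabilities monotone in the column norms `s_j = ‖G[:,j]‖²` yields a contraction:
`E‖C_k(G) - G‖_F² ≤ (1 - k/d)‖G‖_F²`. -/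
theorem block_coordinate_selection_contraction
    {n d k : ℕ} (hd : 0 < d) (hk : k ≤ d)
    (G : Matrix (Fin n) (Fin d) ℝ)
    (p : Finset (Fin d) → ℝ)
    (hp0 : ∀ ω, 0 ≤ p ω) (hp1 : ∑ ω : Finset (Fin d), p ω = 1)
    (hcard : ∀ ω, p ω ≠ 0 → ω.card = k)
    (hmono : ∀ j j' : Fin d,
      (∑ i, (G i j) ^ 2) ≤ (∑ i, (G i j') ^ 2) →
      (∑ ω ∈ Finset.univ.filter (fun ω : Finset (Fin d) => j ∈ ω), p ω) ≤
        (∑ ω ∈ Finset.univ.filter (fun ω : Finset (Fin d) => j' ∈ ω), p ω)) :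
    ∑ ω : Finset (Fin d), p ω *
        (∑ i, ∑ j, ((if j ∈ ω then G i j else 0) - G i j) ^ 2) ≤
      (1 - (k : ℝ) / d) * ∑ i, ∑ j, (G i j) ^ 2 :=
  block_coordinate_selection_contraction_general G p hp1 hcard hmono
end

section
/- Let {a_t} and {b_t} be nonnegative real sequences satisfying a_{t+1} ≤ (1 - rγ)a_t - sγ b_t + c for all t ≥ 0, where r, γ, s, c > 0 and rγ < 1. Define w_t = (1 - rγ)^{-(t+1)} and W_T = ∑_{t=0}^{T-1} w_t. Then (s/W_T)∑_{t=0}^{T-1} b_t w_t + r a_T ≤ (a_0/γ)(1 - rγ)^T + c/γ. -/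
/-- Stich's recursion lemma: if `a_{t+1} ≤ (1-rγ)a_t - sγ b_t + c` for nonnegative
sequences, then `(s/W_T)∑ b_t w_t + r a_T ≤ (a_0/γ)(1-rγ)^T + c/γ`,
where `w_t = (1-rγ)^{-(t+1)}` and `W_T = ∑_{t<T} w_t`. -/
theorem stich_recursion (a b : ℕ → ℝ) (r γ s c : ℝ)
    (ha : ∀ t, 0 ≤ a t) (hb : ∀ t, 0 ≤ b t)
    (hr : 0 < r) (hγ : 0 < γ) (hs : 0 < s) (hc : 0 < c) (hrγ : r * γ < 1)
    (hrec : ∀ t, a (t + 1) ≤ (1 - r * γ) * a t - s * γ * b t + c)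
    (T : ℕ) (hT : 0 < T) :
    s / (∑ t ∈ Finset.range T, ((1 - r * γ) ^ (t + 1))⁻¹) *
        ∑ t ∈ Finset.range T, b t * ((1 - r * γ) ^ (t + 1))⁻¹ + r * a T ≤
      a 0 / γ * (1 - r * γ) ^ T + c / γ := by
  set ρ : ℝ := 1 - r * γ with hρdef
  have hρ0 : 0 < ρ := by simp [hρdef]; linarith
  have hρ1 : ρ < 1 := by
    have : 0 < r * γ := mul_pos hr hγ
    simp [hρdef]; linarith
  set S : ℝ := ∑ t ∈ Finset.range T, (ρ ^ (t + 1))⁻¹ with hSdef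
  set B : ℝ := ∑ t ∈ Finset.range T, b t * (ρ ^ (t + 1))⁻¹ with hBdef
  -- telescoping key inequality
  have key : ∀ n : ℕ, s * γ * (∑ t ∈ Finset.range n, b t * (ρ ^ (t + 1))⁻¹)
      + (ρ ^ n)⁻¹ * a n ≤ a 0 + c * ∑ t ∈ Finset.range n, (ρ ^ (t + 1))⁻¹ := by
    intro n
    induction n with
    | zero => simp
    | succ n ih =>
      have hw : 0 < (ρ ^ (n + 1))⁻¹ := by positivity
      have hmul := mul_le_mul_of_nonneg_left (hrec n) hw.le
      have hid : (ρ ^ (n + 1))⁻¹ * ρ = (ρ ^ n)⁻¹ := by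
        field_simp
        ring
      have hid' : (ρ ^ (n + 1))⁻¹ * (ρ * a n) = (ρ ^ n)⁻¹ * a n := by
        rw [← mul_assoc, mul_comm ((ρ ^ (n+1))⁻¹) ρ, mul_comm ρ ((ρ ^ (n+1))⁻¹), hid]
      rw [Finset.sum_range_succ, Finset.sum_range_succ]
      nlinarith [hmul, hid']
  have hkey := key T
  -- geometric identity: r*γ*S = ρ^{-T} - 1
  have hgeo : r * γ * S = (ρ ^ T)⁻¹ - 1 := by
    have : ∀ t : ℕ, r * γ * (ρ ^ (t + 1))⁻¹ = (ρ ^ (t + 1))⁻¹ - (ρ ^ t)⁻¹ := by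
      intro t
      have h1 : (ρ ^ t)⁻¹ = (ρ ^ (t + 1))⁻¹ * ρ := by field_simp; ring
      rw [h1, hρdef]; ring
    calc r * γ * S = ∑ t ∈ Finset.range T, ((ρ ^ (t + 1))⁻¹ - (ρ ^ t)⁻¹) := by
          rw [hSdef, Finset.mul_sum]
          exact Finset.sum_congr rfl fun t _ => this t
      _ = (ρ ^ T)⁻¹ - (ρ ^ 0)⁻¹ := Finset.sum_range_sub (fun i => (ρ ^ i)⁻¹) T
      _ = (ρ ^ T)⁻¹ - 1 := by simp
  have hP : (0:ℝ) < ρ ^ T := by positivity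
  have hQ : (0:ℝ) < (ρ ^ T)⁻¹ := by positivity
  have hQ1 : 1 < (ρ ^ T)⁻¹ := by
    rw [lt_inv_comm₀ one_pos hP]
    simpa using pow_lt_one₀ hρ0.le hρ1 hT.ne'
  have hSpos : 0 < S := by
    nlinarith [mul_pos hr hγ]
  -- S ≥ ρ^{-T}
  have hSQ : (ρ ^ T)⁻¹ ≤ S := by
    have hρT1 : ρ ^ T ≤ ρ := by
      calc ρ ^ T ≤ ρ ^ 1 := pow_le_pow_of_le_one hρ0.le hρ1.le hT
        _ = ρ := pow_one ρ
    -- r*γ*S = ρ^{-T} - 1 and need S ≥ ρ^{-T}, i.e. ρ^{-T} - 1 ≥ rγ ρ^{-T},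
    -- i.e. ρ^{-T} * ρ ≥ 1, i.e. ρ^{T-1} ≤ 1
    have h2 : 1 ≤ (ρ ^ T)⁻¹ * ρ := by
      rw [inv_mul_eq_div, le_div_iff₀ hP, one_mul]
      exact hρT1
    nlinarith [mul_pos hr hγ]
  have hPQ : ρ ^ T * (ρ ^ T)⁻¹ = 1 := mul_inv_cancel₀ hP.ne'
  -- assemble
  rw [div_mul_eq_mul_div, ← le_sub_iff_add_le, div_le_iff₀ hSpos]
  have e1 : r * γ * S * a T = ((ρ ^ T)⁻¹ - 1) * a T := by rw [hgeo]
  have h3 : 1 ≤ ρ ^ T * S := by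
    calc (1:ℝ) = ρ ^ T * (ρ ^ T)⁻¹ := hPQ.symm
      _ ≤ ρ ^ T * S := mul_le_mul_of_nonneg_left hSQ hP.le
  have e2 : a 0 ≤ a 0 * (ρ ^ T * S) := le_mul_of_one_le_right (ha 0) h3
  have hfinal : s * B * γ ≤ (a 0 * ρ ^ T + c - r * a T * γ) * S := by
    nlinarith [hkey, e1, e2, ha T]
  have heq : (a 0 / γ * ρ ^ T + c / γ - r * a T) * S
      = (a 0 * ρ ^ T + c - r * a T * γ) * S / γ := by
    field_simp
    try ring
    try exact Or.inl trivial
  rw [heq, le_div_iff₀ hγ]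
  linarith [hfinal]
end

section
/- If f : ℝ^d → ℝ is differentiable and satisfies the Polyak–Łojasiewicz condition with parameter μ > 0, i.e., ||∇f(x)||² ≥ 2μ(f(x) - f*) for all x where f* = min f, then f satisfies the quadratic growth condition: f(x) - f* ≥ (μ/2)||x - x_p||², where x_p is the projection of x onto the solution set X* = argmin f. -/
open Filter Topology

/-- If `g` has derivative `L` at `y` and `g z ≥ g y - K‖z-y‖` for all `z`, then `‖L‖ ≤ K`. -/
lemma opnorm_le_of_linear_lower_bound {E : Type*} [NormedAddCommGroup E] [NormedSpace ℝ E]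
    {g : E → ℝ} {L : E →L[ℝ] ℝ} {y : E} {K : ℝ} (hK : 0 ≤ K)
    (hL : HasFDerivAt g L y) (hlb : ∀ z, g y - K * ‖z - y‖ ≤ g z) :
    ‖L‖ ≤ K := by
  have key : ∀ w : E, -(K * ‖w‖) ≤ L w := by
    intro w
    have hline : HasDerivAt (fun t : ℝ => y + t • w) w 0 := by
      simpa using ((hasDerivAt_id (0:ℝ)).smul_const w).const_add y
    have hL' : HasFDerivAt g L ((fun t : ℝ => y + t • w) 0) := by simpa using hL
    have hφ : HasDerivAt (fun t : ℝ => g (y + t • w)) (L w) 0 := hL'.comp_hasDerivAt 0 hline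
    have hslope : Tendsto (slope (fun t : ℝ => g (y + t • w)) 0) (𝓝[>] 0) (𝓝 (L w)) :=
      (hasDerivAt_iff_tendsto_slope.mp hφ).mono_left
        (nhdsWithin_mono _ fun t ht => ne_of_gt ht)
    refine ge_of_tendsto hslope ?_
    filter_upwards [self_mem_nhdsWithin] with t (ht : 0 < t)
    have h1 := hlb (y + t • w)
    have h2 : ‖y + t • w - y‖ = t * ‖w‖ := by
      simp [norm_smul, abs_of_pos ht]
    rw [h2] at h1
    rw [slope_def_field]
    simp only [zero_smul, add_zero, sub_zero]
    rw [le_div_iff₀ ht]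
    nlinarith
  refine L.opNorm_le_bound hK fun w => ?_
  have h1 := key w
  have h2 := key (-w)
  rw [map_neg, norm_neg] at h2
  rw [Real.norm_eq_abs, abs_le]
  constructor <;> linarith

/-- PL condition implies quadratic growth: if `‖∇f(x)‖² ≥ 2μ(f(x) - f*)` for all `x`,
then `f(x) - f* ≥ (μ/2)‖x - x_p‖²` where `x_p` is the projection of `x` onto the
solution set `X* = {x | f x = f*}`. -/
theorem pl_implies_quadratic_growth {d : ℕ}
    (f : EuclideanSpace ℝ (Fin d) → ℝ) (μ fstar : ℝ) (hμ : 0 < μ)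
    (hdiff : Differentiable ℝ f) (hmin : ∀ x, fstar ≤ f x)
    (Xs : Set (EuclideanSpace ℝ (Fin d))) (hXs : Xs = {x | f x = fstar})
    (hne : Xs.Nonempty) (hclosed : IsClosed Xs)
    (hPL : ∀ x, ‖gradient f x‖ ^ 2 ≥ 2 * μ * (f x - fstar))
    (x xp : EuclideanSpace ℝ (Fin d)) (hxp : xp ∈ Xs)
    (hproj : ∀ y ∈ Xs, ‖x - xp‖ ≤ ‖x - y‖) :
    f x - fstar ≥ μ / 2 * ‖x - xp‖ ^ 2 := by
  set s : ℝ := f x - fstar with hs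
  have hs0 : 0 ≤ s := by have := hmin x; simp only [hs]; linarith
  set a : ℝ := Real.sqrt (μ / 2) with ha
  have ha0 : 0 < a := Real.sqrt_pos.mpr (by linarith)
  set g : EuclideanSpace ℝ (Fin d) → ℝ := fun z => Real.sqrt (f z - fstar) with hg
  have hgc : Continuous g := Real.continuous_sqrt.comp (hdiff.continuous.sub continuous_const)
  have hg0 : ∀ z, 0 ≤ g z := fun z => Real.sqrt_nonneg _
  -- Main claim: for every K ∈ (0, a), K * ‖x - xp‖ ≤ √s
  have main : ∀ K : ℝ, 0 < K → K < a → K * ‖x - xp‖ ≤ Real.sqrt s := by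
    intro K hK0 hKa
    set h : EuclideanSpace ℝ (Fin d) → ℝ := fun z => g z + K * ‖z - x‖ with hh
    have hhc : Continuous h := by
      exact hgc.add (continuous_const.mul ((continuous_id.sub continuous_const).norm))
    -- coercivity
    have hcoer : Tendsto h (cocompact (EuclideanSpace ℝ (Fin d))) atTop := by
      have hbase : Tendsto (fun z : EuclideanSpace ℝ (Fin d) => K * ‖z‖ - K * ‖x‖)
          (cocompact (EuclideanSpace ℝ (Fin d))) atTop := by
        apply tendsto_atTop_add_const_right
        exact (tendsto_norm_cocompact_atTop).const_mul_atTop hK0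
      refine tendsto_atTop_mono (fun z => ?_) hbase
      have h1 : ‖z‖ - ‖x‖ ≤ ‖z - x‖ := by
        have := norm_sub_norm_le z x
        linarith [le_abs_self (‖z‖ - ‖x‖)]
      have h2 : K * (‖z‖ - ‖x‖) ≤ K * ‖z - x‖ := mul_le_mul_of_nonneg_left h1 hK0.le
      simp only [hh]
      nlinarith [hg0 z]
    obtain ⟨y, hy⟩ := hhc.exists_forall_le hcoer
    have hy1 : g y + K * ‖y - x‖ ≤ Real.sqrt s := by
      have := hy x
      simpa [hh, hg, hs] using this
    -- Ekeland-type inequality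
    have ek : ∀ z, g y - K * ‖z - y‖ ≤ g z := by
      intro z
      have h1 := hy z
      have h2 : ‖z - x‖ ≤ ‖z - y‖ + ‖y - x‖ := by
        have h3 : z - x = (z - y) + (y - x) := by abel
        rw [h3]; exact norm_add_le _ _
      simp only [hh] at h1
      nlinarith
    -- the minimizer is a global minimizer of f
    have hgy : g y = 0 := by
      by_contra hne0
      have hu : 0 < f y - fstar := by
        rcases lt_or_eq_of_le (hmin y) with h | h
        · linarith
        · exact absurd (by simp [hg, ← h]) hne0
      set c : ℝ := Real.sqrt (f y - fstar) with hc
      have hcpos : 0 < c := Real.sqrt_pos.mpr hu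
      have hfd : HasFDerivAt (fun z => f z - fstar) (fderiv ℝ f y) y := by
        simpa using ((hdiff y).hasFDerivAt.sub_const fstar)
      have hG : HasFDerivAt g ((1 / (2 * c)) • fderiv ℝ f y) y := by
        simpa [hg, hc] using hfd.sqrt (by positivity)
      have hnorm := opnorm_le_of_linear_lower_bound hK0.le hG ek
      have hns : ‖(1 / (2 * c)) • fderiv ℝ f y‖ = ‖fderiv ℝ f y‖ / (2 * c) := by
        rw [norm_smul, Real.norm_eq_abs, abs_of_pos (by positivity)]; ring
      rw [hns, div_le_iff₀ (by positivity)] at hnorm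
      have hgradnorm : ‖gradient f y‖ = ‖fderiv ℝ f y‖ := by
        rw [gradient, LinearIsometryEquiv.norm_map]
      have hlow : Real.sqrt (2 * μ * (f y - fstar)) ≤ ‖fderiv ℝ f y‖ := by
        rw [← hgradnorm]
        calc Real.sqrt (2 * μ * (f y - fstar)) ≤ Real.sqrt (‖gradient f y‖ ^ 2) :=
              Real.sqrt_le_sqrt (hPL y)
          _ = ‖gradient f y‖ := Real.sqrt_sq (norm_nonneg _)
      have hsq : Real.sqrt (2 * μ * (f y - fstar)) = 2 * a * c := by
        rw [ha, hc,
          show (2 : ℝ) * μ * (f y - fstar) = (2:ℝ)^2 * (μ/2) * (f y - fstar) by ring,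
          Real.sqrt_mul (by positivity), Real.sqrt_mul (by norm_num), Real.sqrt_sq (by norm_num)]
      rw [hsq] at hlow
      nlinarith
    -- y ∈ Xs
    have hyXs : y ∈ Xs := by
      rw [hXs]
      have h4 : f y - fstar = 0 := by
        have := (Real.sqrt_eq_zero (by linarith [hmin y])).mp hgy
        linarith
      show f y = fstar
      linarith
    have h5 := hproj y hyXs
    have hxy : ‖x - y‖ = ‖y - x‖ := norm_sub_rev x y
    calc K * ‖x - xp‖ ≤ K * ‖y - x‖ := by
          rw [← hxy]; exact mul_le_mul_of_nonneg_left h5 hK0.le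
      _ ≤ Real.sqrt s := by rw [hgy] at hy1; linarith
  -- take K → a
  have hfinal : a * ‖x - xp‖ ≤ Real.sqrt s := by
    rcases eq_or_lt_of_le (norm_nonneg (x - xp)) with hc | hc
    · rw [← hc]; simpa using Real.sqrt_nonneg s
    · by_contra hcon
      push_neg at hcon
      have h1 : Real.sqrt s / ‖x - xp‖ < a := (div_lt_iff₀ hc).mpr hcon
      set K := (Real.sqrt s / ‖x - xp‖ + a) / 2 with hk
      have hq0 : 0 ≤ Real.sqrt s / ‖x - xp‖ := by positivity
      have hK0 : 0 < K := by rw [hk]; linarith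
      have hKa : K < a := by rw [hk]; linarith
      have hKc := main K hK0 hKa
      have h2 : Real.sqrt s / ‖x - xp‖ < K := by rw [hk]; linarith
      have h3 : Real.sqrt s < K * ‖x - xp‖ := (div_lt_iff₀ hc).mp h2
      linarith
  have hmul := mul_le_mul hfinal hfinal (by positivity) (Real.sqrt_nonneg s)
  have hsq : Real.sqrt s * Real.sqrt s = s := Real.mul_self_sqrt hs0
  have haa : a * a = μ / 2 := Real.mul_self_sqrt (by linarith)
  nlinarith [hmul]
end

section
/- Let f : ℝ^d → ℝ be L-smooth. Suppose at iteration t the virtual sequence updates as x̃_{t+1} = x̃_t - γ g_t - z_t, where E_t[g_t] = ḡ_t is the average true gradient at x_t, i.e., ḡ_t = ∇f(x_t) evaluated via the good samples. Then for any 0 < ρ < 1/2, E_t[f(x̃_{t+1})] ≤ f(x̃_t) - (1/2 - ρ)(γ/2)||∇f(x_t)||² + (3γL²/2)||x̃_t - x_t||² + Lγ² E_t||g_t||² + (L + 1/(2ργ) + 1/(2γ)) E_t||z_t||². -/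
open MeasureTheory RealInnerProductSpace

/-! The descent lemma bounds `f (x̃ - γ g - z)` by `f x̃ - ⟪∇f x̃, γ g + z⟫ + (L/2) ‖γ g + z‖²`.
The cross term with `z` is split as `⟪∇f x, z⟫ + ⟪∇f x̃ - ∇f x, z⟫`, and both parts are absorbed
by Young's inequality with weights `ργ` and `γ`. After taking expectations the remaining cross
term is `-γ ⟪∇f x̃, ∇f x⟫ ≤ -(γ/2) ‖∇f x‖² + (γ/2) L² ‖x̃ - x‖²`, by polarization and the
Lipschitz bound on the gradient. The resulting coefficients, `-(1 - ρ) γ / 2` on `‖∇f x‖²` and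
`γ L²` on `‖x̃ - x‖²`, are at most the stated ones. -/

theorem real_inner_le_half_mul_sq_add {E : Type*} [NormedAddCommGroup E] [InnerProductSpace ℝ E]
    {ε : ℝ} (hε : 0 < ε) (u w : E) :
    ⟪u, w⟫ ≤ ε / 2 * ‖u‖ ^ 2 + 1 / (2 * ε) * ‖w‖ ^ 2 := by
  have := two_mul_le_add_mul_sq (a := ‖u‖) (b := ‖w‖) hε
  have := real_inner_le_norm u w
  rw [one_div, mul_inv, ← div_eq_inv_mul]
  linarith

theorem half_sub_sq_le_real_inner {E : Type*} [NormedAddCommGroup E] [InnerProductSpace ℝ E]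
    (a b : E) : (‖b‖ ^ 2 - ‖a - b‖ ^ 2) / 2 ≤ ⟪a, b⟫ := by
  nlinarith [norm_sub_sq_real a b, sq_nonneg ‖a‖]

section Smooth

variable {F : Type*} [NormedAddCommGroup F] [InnerProductSpace ℝ F] [CompleteSpace F]
  {f : F → ℝ} {L : ℝ}

theorem le_add_inner_gradient_add_sq_of_lipschitz_gradient (hdiff : Differentiable ℝ f)
    (hLip : ∀ u v, ‖gradient f u - gradient f v‖ ≤ L * ‖u - v‖) (a y : F) :
    f y ≤ f a + ⟪gradient f a, y - a⟫ + L / 2 * ‖y - a‖ ^ 2 := by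
  set v := y - a
  let φ : ℝ → ℝ := fun t => f (a + t • v) - t * ⟪gradient f a, v⟫ - L / 2 * t ^ 2 * ‖v‖ ^ 2
  have hφ : ∀ t, HasDerivAt φ
      (⟪gradient f (a + t • v), v⟫ - ⟪gradient f a, v⟫ - L * t * ‖v‖ ^ 2) t := by
    intro t
    have hline : HasDerivAt (fun t : ℝ => a + t • v) v t := by
      simpa using ((hasDerivAt_id t).smul_const v).const_add a
    have hf := (hdiff (a + t • v)).hasGradientAt.hasFDerivAt.comp_hasDerivAt t hline
    rw [InnerProductSpace.toDual_apply_apply] at hf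
    refine ((hf.sub ((hasDerivAt_id t).mul_const _)).sub
      (((hasDerivAt_pow 2 t).const_mul (L / 2)).mul_const (‖v‖ ^ 2))).congr_deriv ?_
    simp only [Nat.cast_ofNat]
    ring
  have hφ' : ∀ t ∈ interior (Set.Ici (0 : ℝ)),
      ⟪gradient f (a + t • v), v⟫ - ⟪gradient f a, v⟫ - L * t * ‖v‖ ^ 2 ≤ 0 := by
    intro t ht
    rw [interior_Ici, Set.mem_Ioi] at ht
    rw [sub_nonpos]
    calc ⟪gradient f (a + t • v), v⟫ - ⟪gradient f a, v⟫
        = ⟪gradient f (a + t • v) - gradient f a, v⟫ := (inner_sub_left _ _ _).symm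
      _ ≤ ‖gradient f (a + t • v) - gradient f a‖ * ‖v‖ := real_inner_le_norm _ _
      _ ≤ L * ‖a + t • v - a‖ * ‖v‖ := by gcongr; exact hLip _ _
      _ = L * t * ‖v‖ ^ 2 := by
        rw [add_sub_cancel_left, norm_smul, Real.norm_of_nonneg ht.le]; ring
  have hanti := antitoneOn_of_hasDerivWithinAt_nonpos (convex_Ici 0)
    (fun t _ => (hφ t).continuousAt.continuousWithinAt) (fun t _ => (hφ t).hasDerivWithinAt) hφ'
  have := hanti Set.self_mem_Ici (Set.mem_Ici.2 zero_le_one) zero_le_one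
  simp only [φ, one_smul, zero_smul, add_zero, v, add_sub_cancel] at this
  linarith

theorem norm_gradient_sub_sq_le
    (hLip : ∀ u v, ‖gradient f u - gradient f v‖ ≤ L * ‖u - v‖) (u v : F) :
    ‖gradient f u - gradient f v‖ ^ 2 ≤ L ^ 2 * ‖u - v‖ ^ 2 := by
  rw [← mul_pow]
  exact pow_le_pow_left₀ (norm_nonneg _) (hLip u v) 2

theorem perturbed_gradient_step_le (hdiff : Differentiable ℝ f)
    (hLip : ∀ u v, ‖gradient f u - gradient f v‖ ≤ L * ‖u - v‖) (hL : 0 ≤ L) {γ ρ : ℝ}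
    (hγ : 0 < γ) (hρ : 0 < ρ) (x xt u w : F) :
    f (xt - γ • u - w) ≤
      (f xt + ρ * γ / 2 * ‖gradient f x‖ ^ 2 + γ * L ^ 2 / 2 * ‖xt - x‖ ^ 2) +
        -γ * ⟪gradient f xt, u⟫ + L * γ ^ 2 * ‖u‖ ^ 2 +
        (L + 1 / (2 * ρ * γ) + 1 / (2 * γ)) * ‖w‖ ^ 2 := by
  have hdesc := le_add_inner_gradient_add_sq_of_lipschitz_gradient hdiff hLip xt (xt - γ • u - w)
  rw [show xt - γ • u - w - xt = -(γ • u + w) by abel, norm_neg] at hdesc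
  have hsplit : ⟪gradient f xt, -(γ • u + w)⟫ =
      -γ * ⟪gradient f xt, u⟫ + ⟪-gradient f x, w⟫ + ⟪gradient f x - gradient f xt, w⟫ := by
    simp only [inner_neg_right, inner_add_right, real_inner_smul_right, inner_neg_left,
      inner_sub_left]
    ring
  have hyoung₁ := real_inner_le_half_mul_sq_add (mul_pos hρ hγ) (-gradient f x) w
  have hyoung₂ := real_inner_le_half_mul_sq_add hγ (gradient f x - gradient f xt) w
  have hgap := norm_gradient_sub_sq_le hLip x xt
  rw [norm_sub_rev x] at hgap
  have hsq : ‖γ • u + w‖ ^ 2 ≤ 2 * γ ^ 2 * ‖u‖ ^ 2 + 2 * ‖w‖ ^ 2 := by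
    have := norm_add_le (γ • u) w
    rw [norm_smul, Real.norm_of_nonneg hγ.le] at this
    nlinarith [norm_nonneg (γ • u + w), sq_nonneg (γ * ‖u‖ - ‖w‖)]
  rw [norm_neg, ← mul_assoc] at hyoung₁
  have := mul_le_mul_of_nonneg_left hsq (by positivity : (0:ℝ) ≤ L / 2)
  have := mul_le_mul_of_nonneg_left hgap (by positivity : (0:ℝ) ≤ γ / 2)
  linarith

end Smooth

theorem integral_le_of_le_add_inner_add_sq {Ω E : Type*} [MeasurableSpace Ω] {μ : Measure Ω}
    [IsProbabilityMeasure μ] [NormedAddCommGroup E] [InnerProductSpace ℝ E] [CompleteSpace E]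
    {φ : Ω → ℝ} {g z : Ω → E} (hφ : Integrable φ μ) (hg : MemLp g 2 μ) (hz : MemLp z 2 μ)
    {C c a b : ℝ} {v : E}
    (h : ∀ ω, φ ω ≤ C + c * ⟪v, g ω⟫ + a * ‖g ω‖ ^ 2 + b * ‖z ω‖ ^ 2) :
    ∫ ω, φ ω ∂μ ≤
      C + c * ⟪v, ∫ ω, g ω ∂μ⟫ + a * ∫ ω, ‖g ω‖ ^ 2 ∂μ + b * ∫ ω, ‖z ω‖ ^ 2 ∂μ := by
  have hg₁ : Integrable g μ := hg.integrable one_le_two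
  have hinner : Integrable (fun ω => c * ⟪v, g ω⟫) μ := (hg₁.const_inner v).const_mul c
  have hgsq : Integrable (fun ω => a * ‖g ω‖ ^ 2) μ := hg.norm.integrable_sq.const_mul a
  have hzsq : Integrable (fun ω => b * ‖z ω‖ ^ 2) μ := hz.norm.integrable_sq.const_mul b
  have hC : Integrable (fun _ => C) μ := integrable_const C
  have hC' : Integrable (fun ω => C + c * ⟪v, g ω⟫) μ := hC.add hinner
  have hC'' : Integrable (fun ω => C + c * ⟪v, g ω⟫ + a * ‖g ω‖ ^ 2) μ := hC'.add hgsq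
  have hrhs : Integrable (fun ω => C + c * ⟪v, g ω⟫ + a * ‖g ω‖ ^ 2 + b * ‖z ω‖ ^ 2) μ :=
    hC''.add hzsq
  refine (integral_mono hφ hrhs h).trans_eq ?_
  rw [integral_add hC'' hzsq, integral_add hC' hgsq, integral_add hC hinner,
    integral_const, probReal_univ, one_smul, integral_const_mul, integral_const_mul,
    integral_const_mul, integral_inner hg₁]

theorem recursive_suboptimality_bound_general {d : ℕ} {Ω : Type*} [MeasurableSpace Ω]
    (μ : Measure Ω) [IsProbabilityMeasure μ]
    (f : EuclideanSpace ℝ (Fin d) → ℝ) (L : ℝ) (hL : 0 < L)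
    (hdiff : Differentiable ℝ f)
    (hLip : ∀ u v, ‖gradient f u - gradient f v‖ ≤ L * ‖u - v‖)
    (x xt : EuclideanSpace ℝ (Fin d)) (γ ρ : ℝ) (hγ : 0 < γ)
    (hρ0 : 0 < ρ)
    (g z : Ω → EuclideanSpace ℝ (Fin d))
    (hg2 : MemLp g 2 μ) (hz2 : MemLp z 2 μ)
    (hmean : ∫ ω, g ω ∂μ = gradient f x)
    (hfint : Integrable (fun ω => f (xt - γ • g ω - z ω)) μ) :
    ∫ ω, f (xt - γ • g ω - z ω) ∂μ ≤
      f xt - (1 / 2 - ρ) * (γ / 2) * ‖gradient f x‖ ^ 2 +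
        (3 * γ * L ^ 2 / 2) * ‖xt - x‖ ^ 2 +
        L * γ ^ 2 * ∫ ω, ‖g ω‖ ^ 2 ∂μ +
        (L + 1 / (2 * ρ * γ) + 1 / (2 * γ)) * ∫ ω, ‖z ω‖ ^ 2 ∂μ := by
  have hexp := integral_le_of_le_add_inner_add_sq hfint hg2 hz2 fun ω =>
    perturbed_gradient_step_le hdiff hLip hL.le hγ hρ0 x xt (g ω) (z ω)
  rw [hmean] at hexp
  have hcross := half_sub_sq_le_real_inner (gradient f xt) (gradient f x)
  have hgap := norm_gradient_sub_sq_le hLip xt x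
  have hgrad : 0 ≤ γ * ‖gradient f x‖ ^ 2 := by positivity
  have hdist : 0 ≤ γ * L ^ 2 * ‖xt - x‖ ^ 2 := by positivity
  linear_combination hexp + γ * hcross + γ / 2 * hgap + hgrad / 4 + hdist / 2

/-- Recursive bounding of the suboptimality: for `L`-smooth `f`, step size `γ > 0`,
`0 < ρ < 1/2`, and a stochastic gradient `g` with conditional mean `∇f(x)`,
`E f(x̃ - γg - z) ≤ f(x̃) - (1/2-ρ)(γ/2)‖∇f(x)‖² + (3γL²/2)‖x̃-x‖² + Lγ² E‖g‖²
  + (L + 1/(2ργ) + 1/(2γ)) E‖z‖²`. -/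
theorem recursive_suboptimality_bound {d : ℕ} {Ω : Type*} [MeasurableSpace Ω]
    (μ : Measure Ω) [IsProbabilityMeasure μ]
    (f : EuclideanSpace ℝ (Fin d) → ℝ) (L : ℝ) (hL : 0 < L)
    (hdiff : Differentiable ℝ f)
    (hLip : ∀ u v, ‖gradient f u - gradient f v‖ ≤ L * ‖u - v‖)
    (x xt : EuclideanSpace ℝ (Fin d)) (γ ρ : ℝ) (hγ : 0 < γ)
    (hρ0 : 0 < ρ) (hρ : ρ < 1 / 2)
    (g z : Ω → EuclideanSpace ℝ (Fin d))
    (hg2 : MemLp g 2 μ) (hz2 : MemLp z 2 μ)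
    (hmean : ∫ ω, g ω ∂μ = gradient f x)
    (hfint : Integrable (fun ω => f (xt - γ • g ω - z ω)) μ) :
    ∫ ω, f (xt - γ • g ω - z ω) ∂μ ≤
      f xt - (1 / 2 - ρ) * (γ / 2) * ‖gradient f x‖ ^ 2 +
        (3 * γ * L ^ 2 / 2) * ‖xt - x‖ ^ 2 +
        L * γ ^ 2 * ∫ ω, ‖g ω‖ ^ 2 ∂μ +
        (L + 1 / (2 * ρ * γ) + 1 / (2 * γ)) * ∫ ω, ‖z ω‖ ^ 2 ∂μ :=
  recursive_suboptimality_bound_general μ f L hL hdiff hLip x xt γ ρ hγ hρ0 g z hg2 hz2 hmean hfint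
end
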